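/- arXiv:2112.05553 — 2 statements merged into one kernel-verified Lean document; each statement's English description precedes it below -/
import Mathlib

section
/- Let ω₀ > 0, a₀' > 0, γ ∈ (0,1) with γ ≠ 1. For the FO-ESO relative error Δ_fo(jω) = N₄/D₄ with N₄ = ω₀³(jω)^γ - (jω)^γ((jω)^γ + ω₀)³ + (a₀'jω + (jω)²)((jω)^{2γ} + 3ω₀(jω)^γ + 3ω₀²) and D₄ = ω₀³(jω)^γ + (a₀'jω + (jω)²)((jω)^{2γ} + 3ω₀(jω)^γ + 3ω₀²), the limit as ω → ∞ of |Δ_fo(jω)|² is 1. -/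
/-!
Write `z = (jω)^γ` and `u = jω`, so that `(jω)^{2γ} = z²`. Dividing numerator and denominator of
`Δ_fo` by `u²z²` turns both into polynomials in `z⁻¹`, `u⁻¹` and `z / u` with constant term `1`.
Since `‖z‖ = ω^γ`, `‖u‖ = ω` and `0 < γ < 1`, all three tend to `0`, so `Δ_fo(jω) → 1`.
-/

open Filter Topology

/-- The principal-branch power `(jω)^γ = ω^γ e^{iπγ/2}` for `ω > 0`. -/
noncomputable def jpow (ω γ : ℝ) : ℂ :=
  (ω ^ γ : ℝ) * Complex.exp (Complex.I * Real.pi * γ / 2)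

section FOErrorRatio

variable {𝕜 : Type*} [NormedField 𝕜] (ω₀ a : 𝕜)

def foErrorRatio (z u : 𝕜) : 𝕜 :=
  (ω₀ ^ 3 * z - z * (z + ω₀) ^ 3 + (a * u + u ^ 2) * (z ^ 2 + 3 * ω₀ * z + 3 * ω₀ ^ 2)) /
    (ω₀ ^ 3 * z + (a * u + u ^ 2) * (z ^ 2 + 3 * ω₀ * z + 3 * ω₀ ^ 2))

lemma foErrorRatio_eq {z u : 𝕜} (hz : z ≠ 0) (hu : u ≠ 0) :
    foErrorRatio ω₀ a z u =
      (ω₀ ^ 3 * z⁻¹ * u⁻¹ ^ 2 - (1 + ω₀ * z⁻¹) ^ 3 * (z / u) ^ 2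
          + (a * u⁻¹ + 1) * (1 + 3 * ω₀ * z⁻¹ + 3 * ω₀ ^ 2 * z⁻¹ ^ 2)) /
        (ω₀ ^ 3 * z⁻¹ * u⁻¹ ^ 2 + (a * u⁻¹ + 1) * (1 + 3 * ω₀ * z⁻¹ + 3 * ω₀ ^ 2 * z⁻¹ ^ 2)) := by
  have huz : (z ^ 2 * u ^ 2)⁻¹ ≠ 0 := by positivity
  rw [foErrorRatio, ← mul_div_mul_left _ _ huz]
  congr 1 <;> field_simp

lemma tendsto_foErrorRatio {α : Type*} {l : Filter α} {z u : α → 𝕜}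
    (hz : Tendsto z l (Bornology.cobounded 𝕜)) (hu : Tendsto u l (Bornology.cobounded 𝕜))
    (hzu : Tendsto (fun x ↦ z x / u x) l (𝓝 0)) :
    Tendsto (fun x ↦ foErrorRatio ω₀ a (z x) (u x)) l (𝓝 1) := by
  have hF : ContinuousAt (fun w : 𝕜 × 𝕜 × 𝕜 ↦
      (ω₀ ^ 3 * w.1 * w.2.1 ^ 2 - (1 + ω₀ * w.1) ^ 3 * w.2.2 ^ 2
          + (a * w.2.1 + 1) * (1 + 3 * ω₀ * w.1 + 3 * ω₀ ^ 2 * w.1 ^ 2)) /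
        (ω₀ ^ 3 * w.1 * w.2.1 ^ 2 + (a * w.2.1 + 1) * (1 + 3 * ω₀ * w.1 + 3 * ω₀ ^ 2 * w.1 ^ 2)))
      (0, 0, 0) := by
    fun_prop (disch := simp)
  have hlim := hF.tendsto.comp <| (tendsto_inv₀_cobounded.comp hz).prodMk_nhds
    ((tendsto_inv₀_cobounded.comp hu).prodMk_nhds hzu)
  simp only [Function.comp_apply, mul_zero, ne_eq, OfNat.ofNat_ne_zero, not_false_eq_true,
    zero_pow, add_zero, one_pow, sub_self, zero_add, mul_one, one_ne_zero, div_self] at hlim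
  refine hlim.congr' ?_
  filter_upwards [hz.eventually_ne_cobounded 0, hu.eventually_ne_cobounded 0] with x hzx hux
  exact (foErrorRatio_eq ω₀ a hzx hux).symm

end FOErrorRatio

section jpow

lemma norm_jpow {ω : ℝ} (hω : 0 ≤ ω) (ψ : ℝ) : ‖jpow ω ψ‖ = ω ^ ψ := by
  rw [jpow, norm_mul, Complex.norm_real, Real.norm_of_nonneg (Real.rpow_nonneg hω ψ),
    show Complex.I * Real.pi * ψ / 2 = ((Real.pi * ψ / 2 : ℝ) : ℂ) * Complex.I by push_cast; ring,
    Complex.norm_exp_ofReal_mul_I, mul_one]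

lemma jpow_add {ω : ℝ} (hω : 0 < ω) (ψ χ : ℝ) : jpow ω (ψ + χ) = jpow ω ψ * jpow ω χ := by
  rw [jpow, jpow, jpow, Real.rpow_add hω, Complex.ofReal_mul, Complex.ofReal_add, mul_add,
    add_div, Complex.exp_add]
  ring

lemma jpow_ne_zero {ω : ℝ} (hω : 0 < ω) (ψ : ℝ) : jpow ω ψ ≠ 0 :=
  norm_ne_zero_iff.mp <| by rw [norm_jpow hω.le]; positivity

lemma tendsto_jpow_cobounded {ψ : ℝ} (hψ : 0 < ψ) :
    Tendsto (jpow · ψ) atTop (Bornology.cobounded ℂ) := by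
  rw [← tendsto_norm_atTop_iff_cobounded]
  refine (tendsto_rpow_atTop hψ).congr' ?_
  filter_upwards [eventually_ge_atTop 0] with ω hω
  exact (norm_jpow hω ψ).symm

lemma tendsto_jpow_div_jpow {ψ χ : ℝ} (h : ψ < χ) :
    Tendsto (fun ω ↦ jpow ω ψ / jpow ω χ) atTop (𝓝 0) := by
  refine (tendsto_inv₀_cobounded.comp (tendsto_jpow_cobounded (sub_pos.2 h))).congr' ?_
  filter_upwards [eventually_gt_atTop 0] with ω hω
  rw [Function.comp_apply, ← inv_div]
  congr 1
  rw [eq_div_iff (jpow_ne_zero hω ψ), ← jpow_add hω,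
    sub_add_cancel]

end jpow

theorem stmt_16_general (ω₀ a γ : ℝ) (hγ : γ ∈ Set.Ioo (0 : ℝ) 1) :
    Tendsto (fun ω : ℝ =>
        (‖
          (((ω₀ : ℂ) ^ 3 * jpow ω γ - jpow ω γ * (jpow ω γ + ω₀) ^ 3
              + ((a : ℂ) * jpow ω 1 + (jpow ω 1) ^ 2)
                * (jpow ω (2 * γ) + 3 * ω₀ * jpow ω γ + 3 * ω₀ ^ 2)) /
            ((ω₀ : ℂ) ^ 3 * jpow ω γ
              + ((a : ℂ) * jpow ω 1 + (jpow ω 1) ^ 2)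
                * (jpow ω (2 * γ) + 3 * ω₀ * jpow ω γ + 3 * ω₀ ^ 2)))‖) ^ 2)
      atTop (nhds 1) := by
  have hratio := tendsto_foErrorRatio (ω₀ : ℂ) a (tendsto_jpow_cobounded hγ.1)
    (tendsto_jpow_cobounded one_pos) (tendsto_jpow_div_jpow hγ.2)
  have hsq := hratio.norm.pow 2
  rw [norm_one, one_pow] at hsq
  refine hsq.congr' ?_
  filter_upwards [eventually_gt_atTop 0] with ω hω
  rw [two_mul, jpow_add hω, foErrorRatio, ← sq]

/-- for `γ ∈ (0,1)`, the FO-ESO mean-square relative model error `|Δ_fo(jω)|²`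
tends to `1` as `ω → ∞`. -/
theorem stmt_16 (ω₀ a γ : ℝ) (hω₀ : 0 < ω₀) (ha : 0 < a) (hγ : γ ∈ Set.Ioo (0 : ℝ) 1)
    (hγ1 : γ ≠ 1) :
    Tendsto (fun ω : ℝ =>
        (‖
          (((ω₀ : ℂ) ^ 3 * jpow ω γ - jpow ω γ * (jpow ω γ + ω₀) ^ 3
              + ((a : ℂ) * jpow ω 1 + (jpow ω 1) ^ 2)
                * (jpow ω (2 * γ) + 3 * ω₀ * jpow ω γ + 3 * ω₀ ^ 2)) /
            ((ω₀ : ℂ) ^ 3 * jpow ω γ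
              + ((a : ℂ) * jpow ω 1 + (jpow ω 1) ^ 2)
                * (jpow ω (2 * γ) + 3 * ω₀ * jpow ω γ + 3 * ω₀ ^ 2)))‖) ^ 2)
      atTop (nhds 1) :=
  stmt_16_general ω₀ a γ hγ
end

section
/- Let p(s) = Σ_{k} c_k s^{α_k} be a fractional-order polynomial with commensurate order, i.e., all α_k = n_k / q for a common positive integer q and integers n_k ≥ 0. Suppose under the substitution w = s^{1/q} the resulting ordinary polynomial P(w) = Σ_k c_k w^{n_k} has all its roots w_i satisfying |arg(w_i)| > π/(2q). Then p(s) has no root s with Re(s) ≥ 0 under the principal branch s^{1/q} = |s|^{1/q} e^{i arg(s)/q}, arg(s) ∈ (-π, π]. -/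
/-- Matignon-type commensurate-order stability criterion: if every root `w` of
the integer-order polynomial `P` satisfies `|arg w| > π/(2q)`, then the fractional-order
polynomial `p(s) = P(s^{1/q})` (principal branch) has no root `s ≠ 0` with `Re s ≥ 0`. -/
theorem stmt_18 (q : ℕ) (hq : 0 < q) (P : Polynomial ℂ)
    (hroots : ∀ w : ℂ, P.IsRoot w → Real.pi / (2 * q) < |Complex.arg w|) :
    ∀ s : ℂ, 0 ≤ s.re → s ≠ 0 → P.eval (s ^ (1 / (q : ℂ))) ≠ 0 := by
  intro s hre hs h0
  set w : ℂ := s ^ (1 / (q : ℂ)) with hw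
  have hroot : P.IsRoot w := h0
  have hqR : (0 : ℝ) < (q : ℝ) := Nat.cast_pos.mpr hq
  have hq1 : (1 : ℝ) ≤ (q : ℝ) := Nat.one_le_cast.mpr hq
  have hargs : |Complex.arg s| ≤ Real.pi / 2 :=
    Complex.abs_arg_le_pi_div_two_iff.mpr hre
  have hpi : 0 < Real.pi := Real.pi_pos
  -- the exponent z
  set z : ℂ := Complex.log s * (1 / (q : ℂ)) with hz
  have hwz : w = Complex.exp z := by
    rw [hw, Complex.cpow_def_of_ne_zero hs]
  have hzim : z.im = Complex.arg s / q := by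
    rw [hz]
    have : (1 / (q : ℂ)) = ((1 / (q : ℝ) : ℝ) : ℂ) := by push_cast; ring
    rw [this, Complex.mul_im]
    simp [Complex.log_im]
    ring
  have habs : |z.im| ≤ Real.pi / (2 * q) := by
    rw [hzim, abs_div, abs_of_pos hqR, div_le_div_iff₀ hqR (by positivity)]
    calc |Complex.arg s| * (2 * q) ≤ (Real.pi / 2) * (2 * q) := by
          apply mul_le_mul_of_nonneg_right hargs; positivity
      _ = Real.pi * q := by ring
  have hlt : -Real.pi < z.im := by
    have h1 : Real.pi / (2 * q) < Real.pi := by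
      rw [div_lt_iff₀ (by positivity)]
      nlinarith
    have := (abs_le.mp habs).1
    linarith
  have hle : z.im ≤ Real.pi := by
    have h1 : Real.pi / (2 * q) ≤ Real.pi := by
      rw [div_le_iff₀ (by positivity)]
      nlinarith
    have := (abs_le.mp habs).2
    linarith
  have hargw : Complex.arg w = z.im := by
    rw [hwz, ← Complex.log_im, Complex.log_exp hlt hle]
  have := hroots w hroot
  rw [hargw] at this
  linarith [le_of_lt this, habs]
end
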